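/- In the one-counter reachability game G constructed from the deterministic Turing machine T and input word w, for every j ∈ {1,…,2^{2^n}}, every d ∈ Δ and every i ∈ ℕ such that the configuration C^w_i of the run of T on w is defined, the game configuration ((j,d), i) is winning for Verifier if and only if C^w_i(j) = d. In particular, ((1,(q_F,a)), i) is winning for Verifier if and only if T accepts w after exactly i steps of computation. -/
import Mathlib


namespace OneCounter

abbrev Config (S : Type) := S × ℕ

/-- A maximal (finite or infinite) play over a step relation, represented as a
function `ℕ → Option C` that is `some` on an initial segment. -/
structure PlayOn {C : Type} (step : C → C → Prop) where
  f : ℕ → Option C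
  start : (f 0).isSome
  succ : ∀ n c', f (n+1) = some c' → ∃ c, f n = some c ∧ step c c'
  maximal : ∀ n c, f n = some c → f (n+1) = none → ∀ c', ¬ step c c'

/-- The history after `n` steps, most recent configuration first. -/
def hist {C : Type} (f : ℕ → Option C) (n : ℕ) : List C :=
  ((List.range (n+1)).reverse).filterMap f

/-- A strategy for the player owning the configurations satisfying `mine`:
a partial function from histories (most recent configuration first) to
configurations, prescribing only legal moves and defined whenever a move
is available. -/
structure StrategyOn {C : Type} (step : C → C → Prop) (mine : C → Prop) where
  act : List C → Option C
  legal : ∀ h c c', act (c :: h) = some c' → step c c'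
  total : ∀ h c, mine c → (∃ c', step c c') → (act (c :: h)).isSome

/-- A play is compatible with a strategy if at every position owned by the
strategy's player, the next configuration is the prescribed one. -/
def Compat {C : Type} {step : C → C → Prop} {mine : C → Prop}
    (σ : StrategyOn step mine) (ρ : PlayOn step) : Prop :=
  ∀ n c, ρ.f n = some c → mine c → ρ.f (n+1) = σ.act (hist ρ.f n)

/-- A one-counter parity game: two players `Verifier` (`true`) and
`Falsifier` (`false`); every state has an owner and a color. -/
structure OCPG (S : Type) where
  owner : S → Bool
  trans : S → ℤ → S → Prop
  color : S → ℕ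

namespace OCPG

variable {S : Type} (G : OCPG S)

/-- One step between configurations: a transition whose weight matches the
counter difference (the counter, being a natural number, never goes below 0). -/
def Step (c c' : Config S) : Prop := G.trans c.1 ((c'.2 : ℤ) - (c.2 : ℤ)) c'.1

/-- All edge weights lie in `{-1, 0, +1}`. -/
def SmallWeights : Prop := ∀ s v s', G.trans s v s' → v = -1 ∨ v = 0 ∨ v = 1

/-- Color `k` occurs infinitely often along the play. -/
def InfOcc (ρ : PlayOn G.Step) (k : ℕ) : Prop :=
  ∀ N, ∃ n, N ≤ n ∧ ∃ c, ρ.f n = some c ∧ G.color c.1 = k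

/-- The least color occurring infinitely often exists and is even. -/
def VerifierWinsInf (ρ : PlayOn G.Step) : Prop :=
  ∃ k, G.InfOcc ρ k ∧ Even k ∧ ∀ k', G.InfOcc ρ k' → k ≤ k'

/-- Player `b` wins the play: a finite maximal play is lost by the owner of its
last configuration, and an infinite play is won by Verifier iff the least color
occurring infinitely often is even. -/
def WinsPlay (b : Bool) (ρ : PlayOn G.Step) : Prop :=
  (∃ n c, ρ.f n = some c ∧ ρ.f (n+1) = none ∧ G.owner c.1 ≠ b)
  ∨ ((∀ n, (ρ.f n).isSome) ∧ (G.VerifierWinsInf ρ ↔ b = true))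

/-- Player `b` has a winning strategy from configuration `c₀`. -/
def WinsFrom (b : Bool) (c₀ : Config S) : Prop :=
  ∃ σ : StrategyOn G.Step (fun c => G.owner c.1 = b),
    ∀ ρ : PlayOn G.Step, ρ.f 0 = some c₀ → Compat σ ρ → G.WinsPlay b ρ

end OCPG


/-- The tape alphabet `Σ = {0, 1, #, a, r}` with blank `#`, immediate-accept
symbol `a` and immediate-reject symbol `r`. -/
inductive Sym where
  | zero | one | blank | acc | rej
deriving DecidableEq

inductive Dir where
  | left | right
deriving DecidableEq

/-- Tape-cell contents `Δ = Σ ∪ (Q × Σ)`: either a plain symbol, or a symbol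
together with the control state when the head is on this cell. -/
abbrev Delta (Q : Type) := Sym ⊕ (Q × Sym)

/-- A deterministic Turing machine with state set `Q`, initial state `q0`,
transition function `δ` and accepting state `qF`. -/
structure DTM (Q : Type) where
  q0 : Q
  δ : Q → Sym → Q × Sym × Dir
  qF : Q

namespace DTM

variable {Q : Type} (T : DTM Q)

/-- The local successor function: the contents of a cell in the next
configuration are determined by the contents of the cell and its two
neighbours in the current configuration. -/
def succ3 : Delta Q → Delta Q → Delta Q → Delta Q
  | .inr (q, b), .inl b₂, .inl _ =>
      if (T.δ q b).2.2 = Dir.right then .inr ((T.δ q b).1, b₂) else .inl b₂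
  | .inl _, .inl b₂, .inr (q, b) =>
      if (T.δ q b).2.2 = Dir.left then .inr ((T.δ q b).1, b₂) else .inl b₂
  | _, .inr (q, b), _ => .inl (T.δ q b).2.1
  | _, .inl b₂, _ => .inl b₂

/-- The set of predecessor triples of `d`: all triples whose local successor
is `d`. -/
def Pre (d : Delta Q) : Set (Delta Q × Delta Q × Delta Q) :=
  {t | T.succ3 t.1 t.2.1 t.2.2 = d}

/-- The initial configuration `C^w_0 = a (q₀,w₁) w₂ … w_{|w|} # … # a` on the
tape cells `0, …, N+1`. -/
def initConf (w : List Sym) (N : ℕ) : ℕ → Delta Q :=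
  fun j =>
    if j = 0 then .inl .acc
    else if j = N + 1 then .inl .acc
    else if j = 1 then .inr (T.q0, w.getD 0 .blank)
    else if j ≤ w.length then .inl (w.getD (j - 1) .blank)
    else .inl .blank

/-- The run `C^w_0 C^w_1 …` of `T` on `w`: each configuration is obtained from
the previous one by the local successor function on the interior cells
`1, …, N`, the boundary cells `0` and `N+1` being left untouched. -/
def run (w : List Sym) (N : ℕ) : ℕ → ℕ → Delta Q
  | 0 => T.initConf w N
  | i + 1 => fun j =>
      if j = 0 ∨ N + 1 ≤ j then run w N i j
      else T.succ3 (run w N i (j - 1)) (run w N i j) (run w N i (j + 1))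

/-- `T` accepts `w` after exactly `i` computation steps: the `i`-th
configuration has the head on cell 1, in the accepting control state, reading
the symbol `a`. -/
def AcceptsAfter (w : List Sym) (N : ℕ) (i : ℕ) : Prop :=
  T.run w N i 1 = .inr (T.qF, .acc)

end DTM

/-- The states of the one-counter reachability game built from a Turing
machine: Verifier-owned states `(j, d)` and `s'_0`, and Falsifier-owned states
`(j, (d₁,d₂,d₃))`, `s'_z`, `s'_r`, `s'_F`. -/
inductive TMGS (Q : Type) where
  | cell (j : ℕ) (d : Delta Q)
  | triple (j : ℕ) (d₁ d₂ d₃ : Delta Q)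
  | start | sz | sr | sF

/-- Ownership in the reachability game: `true` is Verifier. -/
def tmOwner {Q : Type} : TMGS Q → Bool
  | .cell _ _ => true
  | .start => true
  | _ => false

/-- The transition relation of the one-counter reachability game `G` built
from `T` and `w`. -/
def tmTrans {Q : Type} (T : DTM Q) (w : List Sym) (N : ℕ) :
    TMGS Q → ℤ → TMGS Q → Prop :=
  fun x v y =>
    (x = .start ∧ v = 1 ∧ y = .start) ∨
    (x = .start ∧ v = 0 ∧ y = .cell 1 (.inr (T.qF, .acc))) ∨
    (∃ j d d₁ d₂ d₃, 1 ≤ j ∧ j ≤ N ∧ (d₁, d₂, d₃) ∈ T.Pre d ∧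
      x = .cell j d ∧ v = 0 ∧ y = .triple j d₁ d₂ d₃) ∨
    ((x = .cell 0 (.inl .acc) ∨ x = .cell (N+1) (.inl .acc)) ∧ v = 0 ∧ y = .sF) ∨
    (∃ j d, (j = 0 ∨ j = N+1) ∧ d ≠ Sum.inl Sym.acc ∧
      x = .cell j d ∧ v = 0 ∧ y = .sr) ∨
    (∃ j, j ≤ N + 1 ∧ x = .cell j (T.initConf w N j) ∧ v = 0 ∧ y = .sz) ∨
    (x = .sz ∧ v = 0 ∧ y = .sF) ∨
    (x = .sz ∧ v = -1 ∧ y = .sr) ∨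
    (∃ j d₁ d₂ d₃, 1 ≤ j ∧ j ≤ N ∧ x = .triple j d₁ d₂ d₃ ∧ v = -1 ∧
      (y = .cell (j-1) d₁ ∨ y = .cell j d₂ ∨ y = .cell (j+1) d₃))

/-- One step of the reachability game between configurations. -/
def tmStep {Q : Type} (T : DTM Q) (w : List Sym) (N : ℕ) :
    Config (TMGS Q) → Config (TMGS Q) → Prop :=
  fun c c' => tmTrans T w N c.1 ((c'.2 : ℤ) - (c.2 : ℤ)) c'.1

/-- Verifier can force, from the given configuration, that every compatible
play reaches the state `s'_F`. -/
def VWinsReach {Q : Type} (T : DTM Q) (w : List Sym) (N : ℕ)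
    (c₀ : Config (TMGS Q)) : Prop :=
  ∃ σ : StrategyOn (tmStep T w N) (fun c => tmOwner c.1 = true),
    ∀ ρ : PlayOn (tmStep T w N), ρ.f 0 = some c₀ → Compat σ ρ →
      ∃ n c, ρ.f n = some c ∧ c.1 = TMGS.sF

section Aux

variable {Q : Type} (T : DTM Q) (w : List Sym) (N : ℕ)

/-! ### Basic facts about the run -/

lemma run_boundary (i j : ℕ) (hj : j = 0 ∨ j = N + 1) :
    T.run w N i j = .inl .acc := by
  induction i with
  | zero =>
    rcases hj with h | h
    · simp [DTM.run, DTM.initConf, h]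
    · subst h; simp [DTM.run, DTM.initConf]
  | succ i ih =>
    have h' : j = 0 ∨ N + 1 ≤ j := by omega
    simp only [DTM.run]
    rw [if_pos h']
    exact ih

lemma run_interior (i j : ℕ) (h1 : 1 ≤ j) (h2 : j ≤ N) :
    T.run w N (i+1) j =
      T.succ3 (T.run w N i (j-1)) (T.run w N i j) (T.run w N i (j+1)) := by
  have h' : ¬ (j = 0 ∨ N + 1 ≤ j) := by omega
  simp only [DTM.run]
  rw [if_neg h']

/-! ### Facts about `hist` -/

lemma hist_zero {C : Type} (f : ℕ → Option C) : hist f 0 = (f 0).toList := by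
  cases h : f 0 <;> simp [hist, List.range_succ, h]

lemma hist_succ {C : Type} (f : ℕ → Option C) (n : ℕ) :
    hist f (n+1) = (f (n+1)).toList ++ hist f n := by
  cases h : f (n+1) <;> simp [hist, List.range_succ, h]

lemma hist_cons {C : Type} (f : ℕ → Option C) (n : ℕ) (c : C) (h : f n = some c) :
    ∃ t, hist f n = c :: t := by
  cases n with
  | zero => exact ⟨[], by rw [hist_zero, h]; rfl⟩
  | succ n => exact ⟨hist f n, by rw [hist_succ, h]; rfl⟩

/-! ### Analysis of the transition relation -/

lemma step_from_sr (v : ℕ) (c' : Config (TMGS Q)) : ¬ tmStep T w N (.sr, v) c' := by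
  intro h
  simp only [tmStep, tmTrans] at h
  simp at h

lemma step_from_sF (v : ℕ) (c' : Config (TMGS Q)) : ¬ tmStep T w N (.sF, v) c' := by
  intro h
  simp only [tmStep, tmTrans] at h
  simp at h

lemma step_from_triple {j : ℕ} {d₁ d₂ d₃ : Delta Q} {v : ℕ} {c' : Config (TMGS Q)}
    (h : tmStep T w N (.triple j d₁ d₂ d₃, v) c') :
    1 ≤ j ∧ j ≤ N ∧ 1 ≤ v ∧ c'.2 = v - 1 ∧
      (c'.1 = .cell (j-1) d₁ ∨ c'.1 = .cell j d₂ ∨ c'.1 = .cell (j+1) d₃) := by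
  obtain ⟨y, v'⟩ := c'
  simp only [tmStep, tmTrans] at h
  rcases h with ⟨h,-,-⟩|⟨h,-,-⟩|⟨_,_,_,_,_,-,-,-,h,-,-⟩|⟨h,-,-⟩|⟨_,_,-,-,h,-,-⟩|
    ⟨_,-,h,-,-⟩|⟨h,-,-⟩|⟨h,-,-⟩|⟨j',e1,e2,e3,hj1,hj2,hx,hv,hy⟩
  · exact absurd h (by simp)
  · exact absurd h (by simp)
  · exact absurd h (by simp)
  · exact absurd h (by simp)
  · exact absurd h (by simp)
  · exact absurd h (by simp)
  · exact absurd h (by simp)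
  · exact absurd h (by simp)
  · injection hx with h1 h2 h3 h4
    subst h1; subst h2; subst h3; subst h4
    exact ⟨hj1, hj2, by omega, by omega, hy⟩

lemma step_from_sz {v : ℕ} {c' : Config (TMGS Q)}
    (h : tmStep T w N (.sz, v) c') :
    (c'.1 = .sF ∧ c'.2 = v) ∨ (c'.1 = .sr ∧ 1 ≤ v ∧ c'.2 = v - 1) := by
  obtain ⟨y, v'⟩ := c'
  simp only [tmStep, tmTrans] at h
  rcases h with ⟨h,-,-⟩|⟨h,-,-⟩|⟨_,_,_,_,_,-,-,-,h,-,-⟩|⟨h,-,-⟩|⟨_,_,-,-,h,-,-⟩|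
    ⟨_,-,h,-,-⟩|⟨-,hv,hy⟩|⟨-,hv,hy⟩|⟨_,_,_,_,-,-,h,-,-⟩
  · exact absurd h (by simp)
  · exact absurd h (by simp)
  · exact absurd h (by simp)
  · exact absurd h (by simp)
  · exact absurd h (by simp)
  · exact absurd h (by simp)
  · exact Or.inl ⟨hy, by omega⟩
  · exact Or.inr ⟨hy, by omega, by omega⟩
  · exact absurd h (by simp)

lemma step_from_cell {j : ℕ} {d : Delta Q} {v : ℕ} {c' : Config (TMGS Q)}
    (h : tmStep T w N (.cell j d, v) c') :
    (∃ d₁ d₂ d₃, 1 ≤ j ∧ j ≤ N ∧ T.succ3 d₁ d₂ d₃ = d ∧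
      c' = (.triple j d₁ d₂ d₃, v)) ∨
    ((j = 0 ∨ j = N+1) ∧ d = Sum.inl Sym.acc ∧ c' = (.sF, v)) ∨
    ((j = 0 ∨ j = N+1) ∧ d ≠ Sum.inl Sym.acc ∧ c' = (.sr, v)) ∨
    (j ≤ N + 1 ∧ d = T.initConf w N j ∧ c' = (.sz, v)) := by
  obtain ⟨y, v'⟩ := c'
  simp only [tmStep, tmTrans] at h
  rcases h with ⟨h,-,-⟩|⟨h,-,-⟩|⟨j',d',e1,e2,e3,hj1,hj2,hp,hx,hv,hy⟩|⟨h|h,hv,hy⟩|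
    ⟨j',d',hj,hd,hx,hv,hy⟩|⟨j',hj,hx,hv,hy⟩|⟨h,-,-⟩|⟨h,-,-⟩|⟨_,_,_,_,-,-,h,-,-⟩
  · exact absurd h (by simp)
  · exact absurd h (by simp)
  · injection hx with h1 h2
    subst h1; subst h2
    left
    exact ⟨e1, e2, e3, hj1, hj2, hp, by rw [hy, show v' = v by omega]⟩
  · injection h with h1 h2
    subst h1; subst h2
    right; left
    exact ⟨Or.inl rfl, rfl, by rw [hy, show v' = v by omega]⟩
  · injection h with h1 h2
    subst h1; subst h2
    right; left
    exact ⟨Or.inr rfl, rfl, by rw [hy, show v' = v by omega]⟩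
  · injection hx with h1 h2
    subst h1; subst h2
    right; right; left
    exact ⟨hj, hd, by rw [hy, show v' = v by omega]⟩
  · injection hx with h1 h2
    subst h1
    right; right; right
    exact ⟨hj, h2, by rw [hy, show v' = v by omega]⟩
  · exact absurd h (by simp)
  · exact absurd h (by simp)
  · exact absurd h (by simp)

/-! ### Verifier's strategy -/

open Classical in
noncomputable def vmove : Config (TMGS Q) → Option (Config (TMGS Q))
  | (.start, v) => some (.start, v + 1)
  | (.cell j d, v) =>
    if j = 0 ∨ j = N + 1 then
      if d = Sum.inl Sym.acc then some (.sF, v) else some (.sr, v)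
    else if 1 ≤ j ∧ j ≤ N ∧ d = T.run w N v j then
      if v = 0 then some (.sz, 0)
      else some (.triple j (T.run w N (v-1) (j-1)) (T.run w N (v-1) j)
        (T.run w N (v-1) (j+1)), v)
    else none
  | _ => none

lemma vmove_legal {c c' : Config (TMGS Q)} (h : vmove T w N c = some c') :
    tmStep T w N c c' := by
  obtain ⟨s, v⟩ := c
  match s with
  | .start =>
    simp only [vmove] at h
    cases h
    exact Or.inl ⟨rfl, by push_cast; ring, rfl⟩
  | .triple j d₁ d₂ d₃ => simp [vmove] at h
  | .sz => simp [vmove] at h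
  | .sr => simp [vmove] at h
  | .sF => simp [vmove] at h
  | .cell j d =>
    simp only [vmove] at h
    split at h
    · rename_i hb
      split at h
      · rename_i hd
        cases h
        refine Or.inr (Or.inr (Or.inr (Or.inl ⟨?_, by push_cast; ring, rfl⟩)))
        rcases hb with rfl | rfl
        · exact Or.inl (by rw [hd])
        · exact Or.inr (by rw [hd])
      · rename_i hd
        cases h
        exact Or.inr (Or.inr (Or.inr (Or.inr (Or.inl
          ⟨j, d, hb, hd, rfl, by push_cast; ring, rfl⟩))))
    · rename_i hb
      split at h
      · rename_i hcond
        obtain ⟨hj1, hj2, hd⟩ := hcond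
        split at h
        · rename_i hv0
          cases h
          refine Or.inr (Or.inr (Or.inr (Or.inr (Or.inr (Or.inl
            ⟨j, by omega, ?_, by omega, rfl⟩)))))
          subst hv0
          rw [hd]; rfl
        · rename_i hv0
          cases h
          refine Or.inr (Or.inr (Or.inl
            ⟨j, d, _, _, _, hj1, hj2, ?_, rfl, by push_cast; ring, rfl⟩))
          show T.succ3 _ _ _ = d
          rw [← show v - 1 + 1 = v by omega] at hd
          rw [hd, run_interior T w N (v-1) j hj1 hj2]
      · exact absurd h (by simp)

open Classical in
noncomputable def vact (c : Config (TMGS Q)) : Option (Config (TMGS Q)) :=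
  if h : ∃ c', tmStep T w N c c' then some ((vmove T w N c).getD h.choose)
  else vmove T w N c

lemma vact_legal {c c' : Config (TMGS Q)} (h : vact T w N c = some c') :
    tmStep T w N c c' := by
  unfold vact at h
  split at h
  · rename_i hex
    cases hm : vmove T w N c with
    | some x =>
      rw [hm] at h
      obtain rfl := Option.some.inj h
      exact vmove_legal T w N hm
    | none =>
      rw [hm] at h
      obtain rfl := Option.some.inj h
      exact hex.choose_spec
  · exact vmove_legal T w N h

lemma vact_total {c : Config (TMGS Q)} (hex : ∃ c', tmStep T w N c c') :
    (vact T w N c).isSome := by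
  unfold vact
  rw [dif_pos hex]
  rfl

lemma vact_eq {c x : Config (TMGS Q)} (h : vmove T w N c = some x) :
    vact T w N c = some x := by
  unfold vact
  split
  · rw [h]; rfl
  · exact h

noncomputable def vstrat : StrategyOn (tmStep T w N) (fun c => tmOwner c.1 = true) where
  act := fun L => match L with
    | [] => none
    | c :: _ => vact T w N c
  legal := fun h c c' hh => vact_legal T w N hh
  total := fun h c _ hex => vact_total T w N hex

/-! ### The Verifier invariant and measure -/

def mu : Config (TMGS Q) → ℕ
  | (.cell _ _, v) => 2*v + 2
  | (.triple _ _ _ _, v) => 2*v + 1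
  | (.sz, _) => 1
  | _ => 0

def VInv : Config (TMGS Q) → Prop
  | (.cell j d, v) => j ≤ N + 1 ∧ d = T.run w N v j
  | (.triple j d₁ d₂ d₃, v) => 1 ≤ j ∧ j ≤ N ∧ 1 ≤ v ∧
      d₁ = T.run w N (v-1) (j-1) ∧ d₂ = T.run w N (v-1) j ∧
      d₃ = T.run w N (v-1) (j+1)
  | (.sz, v) => v = 0
  | (.sF, _) => True
  | _ => False

lemma wins_of_correct (j : ℕ) (d : Delta Q) (i : ℕ) (h1 : 1 ≤ j) (h2 : j ≤ N)
    (hd : d = T.run w N i j) : VWinsReach T w N (.cell j d, i) := by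
  refine ⟨vstrat T w N, fun ρ h0 hcomp => ?_⟩
  suffices key : ∀ m n (c : Config (TMGS Q)), ρ.f n = some c → VInv T w N c →
      mu c < m → ∃ n' c', ρ.f n' = some c' ∧ c'.1 = TMGS.sF by
    exact key (mu ((TMGS.cell j d : TMGS Q), i) + 1) 0 _ h0 ⟨by omega, hd⟩
      (Nat.lt_succ_self _)
  intro m
  induction m with
  | zero => exact fun n c _ _ h => absurd h (Nat.not_lt_zero _)
  | succ m ih =>
    intro n c hn hInv hmu
    obtain ⟨s, v⟩ := c
    match s with
    | .sF => exact ⟨n, _, hn, rfl⟩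
    | .start => exact hInv.elim
    | .sr => exact hInv.elim
    | .cell j' d' =>
      obtain ⟨hjN, hrun⟩ := hInv
      have hmu' : 2*v + 2 < m + 1 := hmu
      by_cases hb : j' = 0 ∨ j' = N + 1
      · have hacc : d' = Sum.inl Sym.acc := by
          rw [hrun, run_boundary T w N v j' hb]
        have hv : vmove T w N (.cell j' d', v) = some (.sF, v) := by
          simp only [vmove]; rw [if_pos hb, if_pos hacc]
        have hstep := hcomp n _ hn rfl
        obtain ⟨t, ht⟩ := hist_cons ρ.f n _ hn
        rw [ht] at hstep
        refine ⟨n+1, (.sF, v), ?_, rfl⟩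
        rw [hstep]
        exact vact_eq T w N hv
      · have hj1 : 1 ≤ j' := by omega
        have hj2 : j' ≤ N := by omega
        have hstep := hcomp n _ hn rfl
        obtain ⟨t, ht⟩ := hist_cons ρ.f n _ hn
        rw [ht] at hstep
        by_cases hv0 : v = 0
        · have hv : vmove T w N (.cell j' d', v) = some (.sz, 0) := by
            simp only [vmove]; rw [if_neg hb, if_pos ⟨hj1, hj2, hrun⟩, if_pos hv0]
          have hn' : ρ.f (n+1) = some (TMGS.sz, 0) := by
            rw [hstep]; exact vact_eq T w N hv
          exact ih (n+1) _ hn' rfl (by show 1 < m; omega)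
        · have hv : vmove T w N (.cell j' d', v) =
              some (.triple j' (T.run w N (v-1) (j'-1)) (T.run w N (v-1) j')
                (T.run w N (v-1) (j'+1)), v) := by
            simp only [vmove]; rw [if_neg hb, if_pos ⟨hj1, hj2, hrun⟩, if_neg hv0]
          have hn' : ρ.f (n+1) = some ((.triple j' (T.run w N (v-1) (j'-1))
              (T.run w N (v-1) j') (T.run w N (v-1) (j'+1)) : TMGS Q), v) := by
            rw [hstep]; exact vact_eq T w N hv
          exact ih (n+1) _ hn' ⟨hj1, hj2, by omega, rfl, rfl, rfl⟩
            (by show 2*v + 1 < m; omega)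
    | .triple j' e1 e2 e3 =>
      obtain ⟨hj1, hj2, hv1, he1, he2, he3⟩ := hInv
      have hmu' : 2*v + 1 < m + 1 := hmu
      have hex : tmStep T w N (.triple j' e1 e2 e3, v) (.cell (j'-1) e1, v-1) :=
        Or.inr (Or.inr (Or.inr (Or.inr (Or.inr (Or.inr (Or.inr (Or.inr
          ⟨j', e1, e2, e3, hj1, hj2, rfl, by omega, Or.inl rfl⟩)))))))
      cases hn1 : ρ.f (n+1) with
      | none => exact absurd hex (ρ.maximal n _ hn hn1 _)
      | some c' =>
        obtain ⟨c'', hc'', hstep⟩ := ρ.succ n c' hn1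
        rw [hn] at hc''
        obtain rfl := Option.some.inj hc''
        obtain ⟨-, -, -, hc2, hy⟩ := step_from_triple T w N hstep
        obtain ⟨y, v'⟩ := c'
        simp only at hc2 hy
        subst hc2
        rcases hy with hy | hy | hy <;> subst hy
        · exact ih (n+1) _ hn1 ⟨by omega, by rw [he1]⟩ (by show 2*(v-1)+2 < m; omega)
        · exact ih (n+1) _ hn1 ⟨by omega, by rw [he2]⟩ (by show 2*(v-1)+2 < m; omega)
        · exact ih (n+1) _ hn1 ⟨by omega, by rw [he3]⟩ (by show 2*(v-1)+2 < m; omega)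
    | .sz =>
      have hv0 : v = 0 := hInv
      subst hv0
      have hex : tmStep T w N (.sz, 0) (.sF, 0) :=
        Or.inr (Or.inr (Or.inr (Or.inr (Or.inr (Or.inr (Or.inl
          ⟨rfl, by norm_num, rfl⟩))))))
      cases hn1 : ρ.f (n+1) with
      | none => exact absurd hex (ρ.maximal n _ hn hn1 _)
      | some c' =>
        obtain ⟨c'', hc'', hstep⟩ := ρ.succ n c' hn1
        rw [hn] at hc''
        obtain rfl := Option.some.inj hc''
        rcases step_from_sz T w N hstep with ⟨h1', -⟩ | ⟨-, hge, -⟩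
        · exact ⟨n+1, c', hn1, h1'⟩
        · exact absurd hge (by omega)

/-! ### Falsifier's counter-strategy -/

open Classical in
noncomputable def fmove : Config (TMGS Q) → Option (Config (TMGS Q))
  | (.sz, v) => if 1 ≤ v then some (.sr, v-1) else some (.sF, v)
  | (.triple j d₁ d₂ d₃, v) =>
    if 1 ≤ j ∧ j ≤ N ∧ 1 ≤ v then
      if d₁ ≠ T.run w N (v-1) (j-1) then some (.cell (j-1) d₁, v-1)
      else if d₂ ≠ T.run w N (v-1) j then some (.cell j d₂, v-1)
      else some (.cell (j+1) d₃, v-1)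
    else none
  | _ => none

lemma fmove_legal {c c' : Config (TMGS Q)} (h : fmove T w N c = some c') :
    tmStep T w N c c' := by
  obtain ⟨s, v⟩ := c
  match s with
  | .start => simp [fmove] at h
  | .cell j d => simp [fmove] at h
  | .sr => simp [fmove] at h
  | .sF => simp [fmove] at h
  | .sz =>
    simp only [fmove] at h
    split at h
    · rename_i hv
      cases h
      exact Or.inr (Or.inr (Or.inr (Or.inr (Or.inr (Or.inr (Or.inr (Or.inl
        ⟨rfl, by omega, rfl⟩)))))))
    · rename_i hv
      cases h
      exact Or.inr (Or.inr (Or.inr (Or.inr (Or.inr (Or.inr (Or.inl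
        ⟨rfl, by push_cast; ring, rfl⟩))))))
  | .triple j d₁ d₂ d₃ =>
    simp only [fmove] at h
    split at h
    · rename_i hcond
      obtain ⟨hj1, hj2, hv⟩ := hcond
      have hw : ((v-1 : ℕ) : ℤ) - (v : ℤ) = -1 := by omega
      split at h
      · cases h
        exact Or.inr (Or.inr (Or.inr (Or.inr (Or.inr (Or.inr (Or.inr (Or.inr
          ⟨j, d₁, d₂, d₃, hj1, hj2, rfl, hw, Or.inl rfl⟩)))))))
      · split at h
        · cases h
          exact Or.inr (Or.inr (Or.inr (Or.inr (Or.inr (Or.inr (Or.inr (Or.inr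
            ⟨j, d₁, d₂, d₃, hj1, hj2, rfl, hw, Or.inr (Or.inl rfl)⟩)))))))
        · cases h
          exact Or.inr (Or.inr (Or.inr (Or.inr (Or.inr (Or.inr (Or.inr (Or.inr
            ⟨j, d₁, d₂, d₃, hj1, hj2, rfl, hw, Or.inr (Or.inr rfl)⟩)))))))
    · exact absurd h (by simp)

lemma fmove_none_no_step {c : Config (TMGS Q)} (ho : tmOwner c.1 = false)
    (h : fmove T w N c = none) (c' : Config (TMGS Q)) : ¬ tmStep T w N c c' := by
  obtain ⟨s, v⟩ := c
  match s with
  | .cell j d => simp [tmOwner] at ho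
  | .start => simp [tmOwner] at ho
  | .sz =>
    simp only [fmove] at h
    split at h <;> exact absurd h (by simp)
  | .sr => exact step_from_sr T w N v c'
  | .sF => exact step_from_sF T w N v c'
  | .triple j d₁ d₂ d₃ =>
    intro hstep
    obtain ⟨hj1, hj2, hv1, -, -⟩ := step_from_triple T w N hstep
    simp only [fmove] at h
    rw [if_pos ⟨hj1, hj2, hv1⟩] at h
    split at h
    · exact absurd h (by simp)
    · split at h <;> exact absurd h (by simp)

/-! ### The play induced by Verifier's strategy and Falsifier's counter-moves -/

noncomputable def playH (σact : List (Config (TMGS Q)) → Option (Config (TMGS Q)))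
    (c₀ : Config (TMGS Q)) :
    ℕ → Option (Config (TMGS Q)) × List (Config (TMGS Q))
  | 0 => (some c₀, [c₀])
  | n+1 =>
    match playH σact c₀ n with
    | (some c, L) =>
      match (if tmOwner c.1 = true then σact L else fmove T w N c) with
      | some c' => (some c', c' :: L)
      | none => (none, L)
    | (none, L) => (none, L)

lemma playH_succ_some (σact : List (Config (TMGS Q)) → Option (Config (TMGS Q)))
    (c₀ : Config (TMGS Q)) (n : ℕ) {c : Config (TMGS Q)}
    {L : List (Config (TMGS Q))}
    (hp : playH T w N σact c₀ n = (some c, L)) :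
    playH T w N σact c₀ (n+1) =
      (match (if tmOwner c.1 = true then σact L else fmove T w N c) with
       | some c' => (some c', c' :: L)
       | none => (none, L)) := by
  show (match playH T w N σact c₀ n with
    | (some c, L) =>
      match (if tmOwner c.1 = true then σact L else fmove T w N c) with
      | some c' => (some c', c' :: L)
      | none => (none, L)
    | (none, L) => (none, L)) = _
  rw [hp]

lemma playH_fst_succ (σact : List (Config (TMGS Q)) → Option (Config (TMGS Q)))
    (c₀ : Config (TMGS Q)) (n : ℕ) {c : Config (TMGS Q)}
    {L : List (Config (TMGS Q))}
    (hp : playH T w N σact c₀ n = (some c, L)) :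
    (playH T w N σact c₀ (n+1)).1 =
      (if tmOwner c.1 = true then σact L else fmove T w N c) := by
  rw [playH_succ_some T w N σact c₀ n hp]
  cases hnext : (if tmOwner c.1 = true then σact L else fmove T w N c) with
  | none => rfl
  | some c' => rfl

lemma playH_fst_succ_none (σact : List (Config (TMGS Q)) → Option (Config (TMGS Q)))
    (c₀ : Config (TMGS Q)) (n : ℕ) {L : List (Config (TMGS Q))}
    (hp : playH T w N σact c₀ n = (none, L)) :
    playH T w N σact c₀ (n+1) = (none, L) := by
  show (match playH T w N σact c₀ n with
    | (some c, L) =>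
      match (if tmOwner c.1 = true then σact L else fmove T w N c) with
      | some c' => (some c', c' :: L)
      | none => (none, L)
    | (none, L) => (none, L)) = _
  rw [hp]

lemma playH_snd (σact : List (Config (TMGS Q)) → Option (Config (TMGS Q)))
    (c₀ : Config (TMGS Q)) (n : ℕ) :
    (playH T w N σact c₀ n).2 =
      hist (fun m => (playH T w N σact c₀ m).1) n := by
  induction n with
  | zero => rw [hist_zero]; rfl
  | succ n ih =>
    rw [hist_succ]
    rcases hp : playH T w N σact c₀ n with ⟨o, L⟩
    rw [hp] at ih
    have ihL : L = hist (fun m => (playH T w N σact c₀ m).1) n := ih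
    cases o with
    | none =>
      rw [playH_fst_succ_none T w N σact c₀ n hp]
      simpa using ihL
    | some c =>
      have he := playH_succ_some T w N σact c₀ n hp
      cases hnext : (if tmOwner c.1 = true then σact L else fmove T w N c) with
      | none =>
        rw [hnext] at he
        rw [he]
        simpa using ihL
      | some c' =>
        rw [hnext] at he
        rw [he]
        simp [ihL]

def FInv : Config (TMGS Q) → Prop
  | (.cell j d, v) => j ≤ N + 1 ∧ d ≠ T.run w N v j
  | (.triple j d₁ d₂ d₃, v) => 1 ≤ j ∧ j ≤ N ∧
      (v = 0 ∨ d₁ ≠ T.run w N (v-1) (j-1) ∨ d₂ ≠ T.run w N (v-1) j ∨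
        d₃ ≠ T.run w N (v-1) (j+1))
  | (.sz, v) => 1 ≤ v
  | (.sr, _) => True
  | _ => False

lemma not_wins_of_incorrect (j : ℕ) (d : Delta Q) (i : ℕ) (h2 : j ≤ N)
    (hd : d ≠ T.run w N i j) : ¬ VWinsReach T w N (.cell j d, i) := by
  rintro ⟨σ, hwin⟩
  set c₀ : Config (TMGS Q) := (.cell j d, i) with hc₀
  set f : ℕ → Option (Config (TMGS Q)) :=
    fun n => (playH T w N σ.act c₀ n).1 with hf
  have hf0 : f 0 = some c₀ := rfl
  have hsnd : ∀ n, (playH T w N σ.act c₀ n).2 = hist f n :=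
    playH_snd T w N σ.act c₀
  -- structure of f
  have hstep_of : ∀ n (c c' : Config (TMGS Q)), playH T w N σ.act c₀ n =
      (some c, hist f n) → f (n+1) = some c' → tmStep T w N c c' := by
    intro n c c' hp h1
    have h2' := playH_fst_succ T w N σ.act c₀ n hp
    have h1' : (playH T w N σ.act c₀ (n+1)).1 = some c' := h1
    by_cases ho : tmOwner c.1 = true
    · rw [if_pos ho] at h2'
      have hcons := hist_cons f n c (by show (playH T w N σ.act c₀ n).1 = some c; rw [hp])
      obtain ⟨t, ht⟩ := hcons
      have : σ.act (c :: t) = some c' := by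
        rw [← ht, ← h2']
        exact h1'
      exact σ.legal t c c' this
    · rw [if_neg ho] at h2'
      exact fmove_legal T w N (by rw [← h2']; exact h1')
  have hpair : ∀ n (c : Config (TMGS Q)), f n = some c →
      playH T w N σ.act c₀ n = (some c, hist f n) := by
    intro n c h
    rcases hp : playH T w N σ.act c₀ n with ⟨o, L⟩
    have ho : o = some c := by
      have h' : (playH T w N σ.act c₀ n).1 = some c := h
      rw [hp] at h'
      exact h'
    subst ho
    have hL : L = hist f n := by
      have h' := hsnd n
      rw [hp] at h'
      exact h'
    rw [hL]
  have hsucc : ∀ n c', f (n+1) = some c' →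
      ∃ c, f n = some c ∧ tmStep T w N c c' := by
    intro n c' h1
    rcases hp : playH T w N σ.act c₀ n with ⟨o, L⟩
    cases o with
    | none =>
      exfalso
      have hnn := playH_fst_succ_none T w N σ.act c₀ n hp
      have h1' : (playH T w N σ.act c₀ (n+1)).1 = some c' := h1
      rw [hnn] at h1'
      exact absurd h1' (by simp)
    | some c =>
      have hfn : f n = some c := by
        show (playH T w N σ.act c₀ n).1 = some c
        rw [hp]
      exact ⟨c, hfn, hstep_of n c c' (hpair n c hfn) h1⟩
  have hmax : ∀ n c, f n = some c → f (n+1) = none →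
      ∀ c', ¬ tmStep T w N c c' := by
    intro n c hfn hnone c' hstep
    have hp := hpair n c hfn
    have h2' := playH_fst_succ T w N σ.act c₀ n hp
    by_cases ho : tmOwner c.1 = true
    · rw [if_pos ho] at h2'
      obtain ⟨t, ht⟩ := hist_cons f n c hfn
      have htot := σ.total t c ho ⟨c', hstep⟩
      have : σ.act (c :: t) = none := by
        rw [← ht, ← h2']
        exact hnone
      rw [this] at htot
      exact absurd htot (by simp)
    · rw [if_neg ho] at h2'
      have : fmove T w N c = none := by rw [← h2']; exact hnone
      exact fmove_none_no_step T w N (by simpa using ho) this c' hstep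
  let ρ : PlayOn (tmStep T w N) := ⟨f, by rw [hf0]; rfl, hsucc, hmax⟩
  have hcompat : Compat σ ρ := by
    intro n c hn ho
    have hp := hpair n c hn
    have h2' := playH_fst_succ T w N σ.act c₀ n hp
    rw [if_pos ho] at h2'
    exact h2'
  -- the invariant
  have hFInv : ∀ n (c : Config (TMGS Q)), f n = some c → FInv T w N c := by
    intro n
    induction n with
    | zero =>
      intro c h
      rw [hf0] at h
      obtain rfl := Option.some.inj h
      exact ⟨by omega, hd⟩
    | succ n ih =>
      intro c' h1
      rcases hp : playH T w N σ.act c₀ n with ⟨o, L⟩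
      cases o with
      | none =>
        exfalso
        have hnn := playH_fst_succ_none T w N σ.act c₀ n hp
        have h1' : (playH T w N σ.act c₀ (n+1)).1 = some c' := h1
        rw [hnn] at h1'
        exact absurd h1' (by simp)
      | some c =>
        have hfn : f n = some c := by
          show (playH T w N σ.act c₀ n).1 = some c
          rw [hp]
        have hinv := ih c hfn
        have hp' := hpair n c hfn
        have h2' := playH_fst_succ T w N σ.act c₀ n hp'
        obtain ⟨s, v⟩ := c
        match s with
        | .start => exact hinv.elim
        | .sF => exact hinv.elim
        | .sr =>
          exfalso
          rw [if_neg (by simp [tmOwner])] at h2'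
          have : fmove T w N ((TMGS.sr : TMGS Q), v) = some c' := by
            rw [← h2']; exact h1
          simp [fmove] at this
        | .sz =>
          have hv : 1 ≤ v := hinv
          rw [if_neg (by simp [tmOwner])] at h2'
          have hnext : fmove T w N ((TMGS.sz : TMGS Q), v) = some c' := by
            rw [← h2']; exact h1
          simp only [fmove] at hnext
          rw [if_pos hv] at hnext
          obtain rfl := Option.some.inj hnext
          exact trivial
        | .triple j' d₁ d₂ d₃ =>
          obtain ⟨hj1, hj2, hdis⟩ := hinv
          rw [if_neg (by simp [tmOwner])] at h2'
          have hnext : fmove T w N ((TMGS.triple j' d₁ d₂ d₃ : TMGS Q), v) = some c' := by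
            rw [← h2']; exact h1
          simp only [fmove] at hnext
          by_cases hv : 1 ≤ v
          · rw [if_pos ⟨hj1, hj2, hv⟩] at hnext
            have hdis' : d₁ ≠ T.run w N (v-1) (j'-1) ∨ d₂ ≠ T.run w N (v-1) j' ∨
                d₃ ≠ T.run w N (v-1) (j'+1) := by
              rcases hdis with h | h
              · omega
              · exact h
            split at hnext
            · rename_i hne1
              obtain rfl := Option.some.inj hnext
              exact ⟨by omega, hne1⟩
            · rename_i hne1
              split at hnext
              · rename_i hne2
                obtain rfl := Option.some.inj hnext
                exact ⟨by omega, hne2⟩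
              · rename_i hne2
                obtain rfl := Option.some.inj hnext
                refine ⟨by omega, fun hh => ?_⟩
                push_neg at hne1 hne2
                rcases hdis' with h | h | h
                · exact h hne1
                · exact h hne2
                · exact h hh
          · rw [if_neg (by omega : ¬(1 ≤ j' ∧ j' ≤ N ∧ 1 ≤ v))] at hnext
            exact absurd hnext (by simp)
        | .cell j' d' =>
          obtain ⟨hjN, hne⟩ := hinv
          rw [if_pos (by simp [tmOwner])] at h2'
          obtain ⟨t, ht⟩ := hist_cons f n _ hfn
          have hact : σ.act (((TMGS.cell j' d' : TMGS Q), v) :: t) = some c' := by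
            rw [← ht, ← h2']; exact h1
          have hstep := σ.legal t _ c' hact
          rcases step_from_cell T w N hstep with
            ⟨d₁, d₂, d₃, hja, hjb, hsu, rfl⟩ | ⟨hb, hacc, rfl⟩ |
            ⟨hb, hnacc, rfl⟩ | ⟨hjc, hini, rfl⟩
          · refine ⟨hja, hjb, ?_⟩
            by_cases hv : v = 0
            · exact Or.inl hv
            · right
              by_contra hall
              push_neg at hall
              obtain ⟨e1, e2, e3⟩ := hall
              apply hne
              rw [← hsu, e1, e2, e3, ← run_interior T w N (v-1) j' hja hjb,
                show v - 1 + 1 = v by omega]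
          · exfalso
            apply hne
            rw [run_boundary T w N v j' hb, hacc]
          · exact trivial
          · show 1 ≤ v
            by_contra hv
            apply hne
            have hv0 : v = 0 := by omega
            subst hv0
            rw [hini]
            rfl
  obtain ⟨n, c, hn, hsF⟩ := hwin ρ rfl hcompat
  have hinv := hFInv n c hn
  obtain ⟨s, vv⟩ := c
  simp only at hsF
  subst hsF
  exact hinv.elim

end Aux

/-- Lemma 12 (correctness of the cell states): in the reachability game built
from a deterministic Turing machine `T` using at most `N = 2^(2^(|w|^k))` tape
cells on the input word `w` over `Σ_I = Σ \ {#}`, a configuration `((j, d), i)`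
with `1 ≤ j ≤ N` is winning for Verifier iff `C^w_i(j) = d`; in particular,
`((1, (q_F, a)), i)` is winning for Verifier iff `T` accepts `w` after exactly
`i` steps of computation. -/
theorem tm_cell_correct {Q : Type} [Finite Q] (T : DTM Q) (w : List Sym) (k : ℕ)
    (hw : w ≠ []) (hwI : ∀ a ∈ w, a ≠ Sym.blank)
    (hspace : ∀ i j q b, T.run w (2 ^ 2 ^ (w.length ^ k)) i j = .inr (q, b) →
      1 ≤ j ∧ j ≤ 2 ^ 2 ^ (w.length ^ k))
    (haccept : ∀ q, (T.δ q .acc).1 = T.qF ∧ (T.δ q .acc).2.1 = Sym.acc) :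
    (∀ j d i, 1 ≤ j → j ≤ 2 ^ 2 ^ (w.length ^ k) →
      (VWinsReach T w (2 ^ 2 ^ (w.length ^ k)) (.cell j d, i) ↔
        T.run w (2 ^ 2 ^ (w.length ^ k)) i j = d)) ∧
    (∀ i, VWinsReach T w (2 ^ 2 ^ (w.length ^ k))
        (.cell 1 (.inr (T.qF, .acc)), i) ↔
      T.AcceptsAfter w (2 ^ 2 ^ (w.length ^ k)) i) := by
  have main : ∀ j d i, 1 ≤ j → j ≤ 2 ^ 2 ^ (w.length ^ k) →
      (VWinsReach T w (2 ^ 2 ^ (w.length ^ k)) (.cell j d, i) ↔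
        T.run w (2 ^ 2 ^ (w.length ^ k)) i j = d) := by
    intro j d i hj1 hj2
    constructor
    · intro hwin
      by_contra hne
      exact absurd hwin
        (not_wins_of_incorrect T w _ j d i hj2 (fun hh => hne hh.symm))
    · intro hrun
      exact wins_of_correct T w _ j d i hj1 hj2 hrun.symm
  refine ⟨main, fun i => ?_⟩
  exact main 1 (.inr (T.qF, .acc)) i le_rfl (Nat.one_le_two_pow)

end OneCounter
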